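/- arXiv:1912.00126 — 10 statements merged into one kernel-verified Lean document; each statement's English description precedes it below -/
import Mathlib

section
/- For every δ ∈ (0, 1/2), for every probability space (Ω, F, P), every event A ∈ F, and all sub-σ-fields G and H of F, with X = E[1_A | G] and Y = E[1_A | H], one has P(|X − Y| ≥ 1 − δ) ≤ 2δ/(1 + δ). -/
/-!
Put `U = {X ≥ 1 - δ}` (a `G`-event), `V = {Y ≤ δ}` (an `H`-event) and `D = {X - Y ≥ 1 - δ}`,
which lies a.e. in `U ∩ V`. Integrating `X` over `U` and `Y` over `V` recovers `P(U ∩ A)` and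
`P(V ∩ A)`, whose difference is at most `P(U \ V) ≤ P(U \ D)`. Splitting both integrals along `D`
gives `(1 - δ) P(D) ≤ δ (P(U \ D) + P(V \ D))`, i.e. `(1 + δ) P(D) ≤ δ (P(U) + P(V))`. Adding the
same estimate with `X` and `Y` exchanged, and using that `{X ≥ 1 - δ}` and `{X ≤ δ}` are disjoint
for `δ < 1/2` (likewise for `Y`), gives `(1 + δ) P(|X - Y| ≥ 1 - δ) ≤ 2δ`.
-/

open MeasureTheory

section

variable {Ω : Type*} {G H m₀ : MeasurableSpace Ω} {μ : Measure Ω} {A : Set Ω}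

theorem one_add_mul_measureReal_le_of_setIntegral_eq [IsFiniteMeasure μ] {δ : ℝ} {X Y : Ω → ℝ}
    (hXi : Integrable X μ) (hYi : Integrable Y μ) {U V D : Set Ω}
    (hU : MeasurableSet U) (hV : MeasurableSet V) (hD : MeasurableSet D)
    (hDU : D ⊆ U) (hDV : D ⊆ V) (hXU : ∀ ω ∈ U, 1 - δ ≤ X ω) (hYV : ∀ ω ∈ V, Y ω ≤ δ)
    (hXYD : ∀ ω ∈ D, 1 - δ ≤ X ω - Y ω)
    (hXA : ∫ ω in U, X ω ∂μ = μ.real (U ∩ A)) (hYA : ∫ ω in V, Y ω ∂μ = μ.real (V ∩ A)) :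
    (1 + δ) * μ.real D ≤ δ * (μ.real U + μ.real V) := by
  have hUD : U ∩ D = D := Set.inter_eq_right.mpr hDU
  have hVD : V ∩ D = D := Set.inter_eq_right.mpr hDV
  have hsplitX := integral_inter_add_sdiff hD hXi.integrableOn (s := U)
  have hsplitY := integral_inter_add_sdiff hD hYi.integrableOn (s := V)
  have hsplitU := measureReal_inter_add_sdiff hD (μ := μ) (s := U)
  have hsplitV := measureReal_inter_add_sdiff hD (μ := μ) (s := V)
  rw [hUD] at hsplitX hsplitU
  rw [hVD] at hsplitY hsplitV
  have hXYD' : (1 - δ) * μ.real D ≤ ∫ ω in D, X ω ∂μ - ∫ ω in D, Y ω ∂μ := by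
    rw [← integral_sub hXi.integrableOn hYi.integrableOn]
    exact setIntegral_ge_of_const_le_real hD (measure_ne_top μ D) hXYD
      (hXi.integrableOn.sub hYi.integrableOn)
  have hXUD : (1 - δ) * μ.real (U \ D) ≤ ∫ ω in U \ D, X ω ∂μ :=
    setIntegral_ge_of_const_le_real (hU.diff hD) (measure_ne_top μ _)
      (fun ω hω => hXU ω hω.1) hXi.integrableOn
  have hYVD : ∫ ω in V \ D, Y ω ∂μ ≤ δ * μ.real (V \ D) := by
    have := setIntegral_mono_on hYi.integrableOn (integrableOn_const (C := δ)) (hV.diff hD)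
      (fun ω hω => hYV ω hω.1)
    rwa [setIntegral_const, smul_eq_mul, mul_comm] at this
  -- `U ∩ A` is covered by `V ∩ A` and `U \ V ⊆ U \ D`.
  have hA : μ.real (U ∩ A) ≤ μ.real (V ∩ A) + μ.real (U \ D) := by
    refine (measureReal_mono fun ω hω => ?_).trans (measureReal_union_le _ _)
    by_cases hωV : ω ∈ V
    · exact Or.inl ⟨hωV, hω.2⟩
    · exact Or.inr ⟨hω.1, fun hωD => hωV (hDV hωD)⟩
  have hD_le : (1 - δ) * μ.real D ≤ δ * (μ.real (U \ D) + μ.real (V \ D)) := by linarith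
  rw [← hsplitU, ← hsplitV]
  linarith

theorem setIntegral_condExp_indicator_one [IsFiniteMeasure μ] (hG : G ≤ m₀)
    (hA : MeasurableSet A) {S : Set Ω} (hS : MeasurableSet[G] S) :
    ∫ ω in S, μ[A.indicator (fun _ => (1 : ℝ)) | G] ω ∂μ = μ.real (S ∩ A) := by
  rw [setIntegral_condExp hG ((integrable_const 1).indicator hA) hS, setIntegral_indicator hA,
    setIntegral_const, smul_eq_mul, mul_one]

theorem condExp_indicator_one_mem_Icc [IsFiniteMeasure μ] (hG : G ≤ m₀) (hA : MeasurableSet A) :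
    ∀ᵐ ω ∂μ, μ[A.indicator (fun _ => (1 : ℝ)) | G] ω ∈ Set.Icc 0 1 := by
  have hnonneg : ∀ᵐ ω ∂μ, 0 ≤ μ[A.indicator (fun _ => (1 : ℝ)) | G] ω :=
    condExp_nonneg (.of_forall fun ω => Set.indicator_nonneg (fun _ _ => zero_le_one) ω)
  have hle_one : ∀ᵐ ω ∂μ, μ[A.indicator (fun _ => (1 : ℝ)) | G] ω ≤ 1 := by
    have := condExp_mono (m := G) ((integrable_const (μ := μ) (1 : ℝ)).indicator hA)
      (integrable_const 1) (.of_forall fun ω => Set.indicator_le_self' (fun _ _ => zero_le_one) ω)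
    rwa [condExp_const hG] at this
  filter_upwards [hnonneg, hle_one] with ω h₀ h₁ using ⟨h₀, h₁⟩

theorem one_add_mul_measureReal_condExp_sub_ge_le [IsFiniteMeasure μ]
    (hG : G ≤ m₀) (hH : H ≤ m₀) (hA : MeasurableSet A) (δ : ℝ) :
    (1 + δ) * μ.real {ω | 1 - δ ≤ μ[A.indicator (fun _ => (1 : ℝ)) | G] ω
        - μ[A.indicator (fun _ => (1 : ℝ)) | H] ω}
      ≤ δ * (μ.real {ω | 1 - δ ≤ μ[A.indicator (fun _ => (1 : ℝ)) | G] ω}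
        + μ.real {ω | μ[A.indicator (fun _ => (1 : ℝ)) | H] ω ≤ δ}) := by
  set X := μ[A.indicator (fun _ => (1 : ℝ)) | G]
  set Y := μ[A.indicator (fun _ => (1 : ℝ)) | H]
  have hUG : MeasurableSet[G] {ω | 1 - δ ≤ X ω} :=
    stronglyMeasurable_const.measurableSet_le stronglyMeasurable_condExp
  have hVH : MeasurableSet[H] {ω | Y ω ≤ δ} :=
    stronglyMeasurable_condExp.measurableSet_le stronglyMeasurable_const
  have hXY : MeasurableSet {ω | 1 - δ ≤ X ω - Y ω} :=
    measurableSet_le measurable_const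
      ((stronglyMeasurable_condExp.mono hG).measurable.sub
        (stronglyMeasurable_condExp.mono hH).measurable)
  -- Since `X ≤ 1` and `0 ≤ Y` a.e., the event `1 - δ ≤ X - Y` a.e. forces `1 - δ ≤ X` and `Y ≤ δ`.
  have hae : {ω | 1 - δ ≤ X ω - Y ω}
      =ᵐ[μ] ({ω | 1 - δ ≤ X ω - Y ω} ∩ {ω | 1 - δ ≤ X ω} ∩ {ω | Y ω ≤ δ} : Set Ω) := by
    filter_upwards [condExp_indicator_one_mem_Icc hG hA, condExp_indicator_one_mem_Icc hH hA]
      with ω hX hY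
    change (1 - δ ≤ X ω - Y ω) = ((1 - δ ≤ X ω - Y ω ∧ 1 - δ ≤ X ω) ∧ Y ω ≤ δ)
    exact propext ⟨fun h => ⟨⟨h, by linarith [hY.1]⟩, by linarith [hX.2]⟩, fun h => h.1.1⟩
  rw [measureReal_congr hae]
  exact one_add_mul_measureReal_le_of_setIntegral_eq integrable_condExp integrable_condExp
    (hG _ hUG) (hH _ hVH) ((hXY.inter (hG _ hUG)).inter (hH _ hVH))
    (fun ω hω => hω.1.2) (fun ω hω => hω.2) (fun ω hω => hω) (fun ω hω => hω)
    (fun ω hω => hω.1.1) (setIntegral_condExp_indicator_one hG hA hUG)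
    (setIntegral_condExp_indicator_one hH hA hVH)

theorem measureReal_ge_add_measureReal_le_le_one [IsZeroOrProbabilityMeasure μ] {Z : Ω → ℝ}
    (hZ : Measurable Z) {a b : ℝ} (hab : b < a) :
    μ.real {ω | a ≤ Z ω} + μ.real {ω | Z ω ≤ b} ≤ 1 := by
  have hdisj : Disjoint {ω | a ≤ Z ω} {ω | Z ω ≤ b} :=
    Set.disjoint_left.mpr fun ω h₁ h₂ => (h₁.trans h₂).not_gt hab
  exact measureReal_union (μ := μ) hdisj (measurableSet_le hZ measurable_const) ▸
    measureReal_le_one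

end

/-- For every δ ∈ (0, 1/2), for every probability space, every event A, and all
sub-σ-fields G and H, with X = E[1_A | G] and Y = E[1_A | H], one has
P(|X − Y| ≥ 1 − δ) ≤ 2δ/(1 + δ). -/
theorem contradictory_predictions_sharp_upper_bound
    {δ : ℝ} (hδ0 : 0 < δ) (hδ1 : δ < 1 / 2)
    {Ω : Type} {F : MeasurableSpace Ω} (P : Measure Ω) [IsProbabilityMeasure P]
    (A : Set Ω) (hA : MeasurableSet A)
    (G H : MeasurableSpace Ω) (hG : G ≤ F) (hH : H ≤ F) :
    P {ω | 1 - δ ≤ |(P[A.indicator (fun _ => (1 : ℝ)) | G]) ω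
        - (P[A.indicator (fun _ => (1 : ℝ)) | H]) ω|}
      ≤ ENNReal.ofReal (2 * δ / (1 + δ)) := by
  set X := P[A.indicator (fun _ => (1 : ℝ)) | G]
  set Y := P[A.indicator (fun _ => (1 : ℝ)) | H]
  have hXY := one_add_mul_measureReal_condExp_sub_ge_le (μ := P) hG hH hA δ
  have hYX := one_add_mul_measureReal_condExp_sub_ge_le (μ := P) hH hG hA δ
  have hsplit : P.real {ω | 1 - δ ≤ |X ω - Y ω|}
      ≤ P.real {ω | 1 - δ ≤ X ω - Y ω} + P.real {ω | 1 - δ ≤ Y ω - X ω} :=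
    (measureReal_mono fun ω hω => by rwa [Set.mem_ofPred_eq, le_abs, neg_sub] at hω).trans
      (measureReal_union_le _ _)
  have hδ : δ < 1 - δ := by linarith
  have hX : P.real {ω | 1 - δ ≤ X ω} + P.real {ω | X ω ≤ δ} ≤ 1 :=
    measureReal_ge_add_measureReal_le_le_one (stronglyMeasurable_condExp.mono hG).measurable hδ
  have hY : P.real {ω | 1 - δ ≤ Y ω} + P.real {ω | Y ω ≤ δ} ≤ 1 :=
    measureReal_ge_add_measureReal_le_le_one (stronglyMeasurable_condExp.mono hH).measurable hδ
  rw [← ofReal_measureReal]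
  refine ENNReal.ofReal_le_ofReal ((le_div_iff₀ (by linarith)).mpr ?_)
  nlinarith
end

section
/- For every δ ∈ (0, 1/2) there exist a probability space (Ω, F, P), an event A ∈ F, and sub-σ-fields G and H of F such that, with X = E[1_A | G] and Y = E[1_A | H], one has P(|X − Y| ≥ 1 − δ) = 2δ/(1 + δ); moreover this example satisfies |X − Y| = (1 − δ)·1_A almost surely. -/
/-!
Take three points `0, 1, 2` with masses `δ/(1+δ), (1-δ)/(1+δ), δ/(1+δ)`, the event `A = {0, 2}`,
`G = σ({2})` and `H = σ({0})`. Conditioning on the σ-field of a single set `s` replaces `1_A` by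
`P(A | s)` on `s` and by `P(A | sᶜ)` off `s`. Since `P(A | {2}) = 1` and `P(A | {0, 1}) = δ`,
`X` is `1` on `{2}` and `δ` elsewhere; symmetrically `Y` is `1` on `{0}` and `δ` elsewhere. So
`|X - Y|` is `1 - δ` on `A` and `0` at the point `1`, and `P(|X - Y| ≥ 1 - δ) = P(A) = 2δ/(1+δ)`.
-/

open MeasureTheory ProbabilityTheory MeasurableSpace

lemma MeasurableSpace.generateFrom_singleton_compl {α : Type*} (s : Set α) :
    generateFrom {sᶜ} = generateFrom {s} := by
  refine le_antisymm (generateFrom_le ?_) (generateFrom_le ?_) <;>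
    simp only [Set.mem_singleton_iff, forall_eq]
  · exact (measurableSet_generateFrom (Set.mem_singleton s)).compl
  · simpa using (measurableSet_generateFrom (Set.mem_singleton sᶜ)).compl

section

variable {Ω : Type*} [MeasurableSpace Ω] {μ : Measure Ω} {s t : Set Ω}

lemma ProbabilityTheory.cond_real_apply (hs : MeasurableSet s) (μ : Measure Ω) (t : Set Ω) :
    μ[|s].real t = μ.real (s ∩ t) / μ.real s := by
  rw [measureReal_def, cond_apply hs, ENNReal.toReal_mul, ENNReal.toReal_inv, div_eq_inv_mul,
    measureReal_def, measureReal_def]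

theorem condExp_set_generateFrom_singleton_ae_eq_piecewise [IsFiniteMeasure μ]
    [DecidablePred (· ∈ s)] (hs : MeasurableSet s) (ht : MeasurableSet t) :
    μ⟦t | generateFrom {s}⟧ =ᵐ[μ]
      s.piecewise (fun _ ↦ μ.real (s ∩ t) / μ.real s) (fun _ ↦ μ.real (sᶜ ∩ t) / μ.real sᶜ) := by
  refine ae_of_ae_restrict_of_ae_restrict_compl s ?_ ?_
  · filter_upwards [condExp_set_generateFrom_singleton hs ht, ae_restrict_mem hs] with ω h hω
    rw [h, Set.piecewise_eq_of_mem _ _ _ hω, cond_real_apply hs]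
  · rw [← generateFrom_singleton_compl s]
    filter_upwards [condExp_set_generateFrom_singleton hs.compl ht, ae_restrict_mem hs.compl]
      with ω h hω
    rw [h, Set.piecewise_eq_of_notMem _ _ _ hω, cond_real_apply hs.compl]

lemma measure_const_le_of_ae_eq_const_mul_indicator {f : Ω → ℝ} {c : ℝ} (hc : 0 < c)
    (hf : ∀ᵐ ω ∂μ, f ω = c * t.indicator (fun _ ↦ 1) ω) :
    μ {ω | c ≤ f ω} = μ t := by
  refine measure_congr ?_
  filter_upwards [hf] with ω hω
  change (c ≤ f ω) = (ω ∈ t)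
  by_cases h : ω ∈ t <;> simp [hω, h, hc]

end

noncomputable def contradictoryMeasure (δ : ℝ) : Measure (Fin 3) :=
  ENNReal.ofReal (δ / (1 + δ)) • Measure.dirac 0 +
    ENNReal.ofReal ((1 - δ) / (1 + δ)) • Measure.dirac 1 +
    ENNReal.ofReal (δ / (1 + δ)) • Measure.dirac 2

section

variable {δ : ℝ}

lemma isProbabilityMeasure_contradictoryMeasure (hδ0 : 0 ≤ δ) (hδ1 : δ ≤ 1) :
    IsProbabilityMeasure (contradictoryMeasure δ) := by
  have ha : 0 ≤ δ / (1 + δ) := by positivity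
  have hb : 0 ≤ (1 - δ) / (1 + δ) := div_nonneg (by linarith) (by positivity)
  have hsum : δ / (1 + δ) + (1 - δ) / (1 + δ) + δ / (1 + δ) = 1 := by
    field_simp
    ring
  constructor
  rw [← ENNReal.ofReal_one, ← hsum, ENNReal.ofReal_add (add_nonneg ha hb) ha,
    ENNReal.ofReal_add ha hb]
  simp [contradictoryMeasure]

lemma contradictoryMeasure_zero_two (hδ0 : 0 ≤ δ) :
    contradictoryMeasure δ {0, 2} = ENNReal.ofReal (2 * δ / (1 + δ)) := by
  have ha : 0 ≤ δ / (1 + δ) := by positivity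
  rw [show 2 * δ / (1 + δ) = δ / (1 + δ) + δ / (1 + δ) by ring, ENNReal.ofReal_add ha ha]
  simp [contradictoryMeasure]

lemma condExp_contradictoryMeasure_ae_eq (hδ0 : 0 < δ) (hδ1 : δ ≤ 1) {i : Fin 3}
    (hi : i ∈ ({0, 2} : Set (Fin 3))) :
    (contradictoryMeasure δ)⟦{0, 2} | generateFrom {{i}}⟧ =ᵐ[contradictoryMeasure δ]
      ({i} : Set (Fin 3)).piecewise (fun _ ↦ 1) (fun _ ↦ δ) := by
  have := isProbabilityMeasure_contradictoryMeasure hδ0.le hδ1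
  have ha : 0 < δ / (1 + δ) := by positivity
  have hb : 0 ≤ (1 - δ) / (1 + δ) := div_nonneg (by linarith) (by positivity)
  refine (condExp_set_generateFrom_singleton_ae_eq_piecewise (measurableSet_singleton i)
    (by measurability)).trans (Filter.EventuallyEq.of_eq ?_)
  have hcond : δ / (1 + δ) / (δ / (1 + δ) + (1 - δ) / (1 + δ)) = δ := by
    field_simp
    ring
  rcases hi with rfl | rfl <;>
    simp [contradictoryMeasure, measureReal_def, ha.le, ha.ne', hb, ENNReal.toReal_add, hcond,
      add_comm ((1 - δ) / (1 + δ))]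

lemma abs_condExp_sub_contradictoryMeasure_ae_eq (hδ0 : 0 < δ) (hδ1 : δ ≤ 1) :
    ∀ᵐ ω ∂contradictoryMeasure δ,
      |((contradictoryMeasure δ)⟦{0, 2} | generateFrom {{2}}⟧) ω -
          ((contradictoryMeasure δ)⟦{0, 2} | generateFrom {{0}}⟧) ω| =
        (1 - δ) * ({0, 2} : Set (Fin 3)).indicator (fun _ ↦ 1) ω := by
  filter_upwards [condExp_contradictoryMeasure_ae_eq hδ0 hδ1 (i := 2) (by simp),
    condExp_contradictoryMeasure_ae_eq hδ0 hδ1 (i := 0) (by simp)] with ω hX hY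
  rw [hX, hY]
  fin_cases ω <;> simp [abs_of_nonneg, abs_of_nonpos, hδ1]

end

/-- For every δ ∈ (0, 1/2) there exist a probability space, an event A, and
sub-σ-fields G and H such that P(|X − Y| ≥ 1 − δ) = 2δ/(1 + δ), where
X = E[1_A | G], Y = E[1_A | H]; moreover |X − Y| = (1 − δ)·1_A a.s. -/
theorem contradictory_predictions_sharp_lower_bound
    {δ : ℝ} (hδ0 : 0 < δ) (hδ1 : δ < 1 / 2) :
    ∃ (Ω : Type) (F : MeasurableSpace Ω) (P : Measure Ω) (_ : IsProbabilityMeasure P)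
      (A : Set Ω) (_ : MeasurableSet A)
      (G H : MeasurableSpace Ω) (_ : G ≤ F) (_ : H ≤ F),
      P {ω | 1 - δ ≤ |(P[A.indicator (fun _ => (1 : ℝ)) | G]) ω
          - (P[A.indicator (fun _ => (1 : ℝ)) | H]) ω|}
        = ENNReal.ofReal (2 * δ / (1 + δ)) ∧
      (∀ᵐ ω ∂P, |(P[A.indicator (fun _ => (1 : ℝ)) | G]) ω
          - (P[A.indicator (fun _ => (1 : ℝ)) | H]) ω|
        = (1 - δ) * A.indicator (fun _ => (1 : ℝ)) ω) := by
  have hδ_le_one : δ ≤ 1 := by linarith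
  have habs := abs_condExp_sub_contradictoryMeasure_ae_eq hδ0 hδ_le_one
  refine ⟨Fin 3, inferInstance, contradictoryMeasure δ,
    isProbabilityMeasure_contradictoryMeasure hδ0.le hδ_le_one, {0, 2}, by measurability,
    generateFrom {{2}}, generateFrom {{0}}, generateFrom_singleton_le (measurableSet_singleton 2),
    generateFrom_singleton_le (measurableSet_singleton 0), ?_, habs⟩
  rw [measure_const_le_of_ae_eq_const_mul_indicator (by linarith) habs,
    contradictoryMeasure_zero_two hδ0.le]
end

section
/- Let δ ∈ (0, 1) and let (Ω, F, P) be a probability space with a measurable partition {C₁₁, C₁₂, C₂₁} of Ω satisfying P(C₁₂) = P(C₂₁) = δ/(1 + δ). Let A = C₁₂ ∪ C₂₁, let G be the σ-field generated by the partition {C₁₁ ∪ C₁₂, C₂₁}, and let H be the σ-field generated by the partition {C₁₁ ∪ C₂₁, C₁₂}. Then with X = E[1_A | G] and Y = E[1_A | H], almost surely X = δ·1_{C₁₁ ∪ C₁₂} + 1_{C₂₁} and Y = δ·1_{C₁₁ ∪ C₂₁} + 1_{C₁₂}, hence |X − Y| = (1 − δ)·1_A almost surely and P(|X − Y| ≥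 1 − δ) = P(A) = 2δ/(1 + δ). -/
/-!
`G` is generated by the single set `C21` (the other generator is its complement), so
`X = P(A | G)` is the elementary conditional probability `P(A | C21) = 1` on `C21` and
`P(A | C21ᶜ) = P(C12) / P(C21ᶜ) = δ` off it; symmetrically for `Y` with `C12`. Hence `X - Y`
vanishes on `C11` and has modulus `1 - δ` on `A`.
-/

open MeasureTheory ProbabilityTheory Set MeasurableSpace

namespace MeasurableSpace

variable {Ω : Type*}

theorem generateFrom_compl_singleton (s : Set Ω) : generateFrom {sᶜ} = generateFrom {s} := by
  refine le_antisymm (generateFrom_le ?_) (generateFrom_le ?_) <;>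
    simp only [mem_singleton_iff, forall_eq]
  · exact (measurableSet_generateFrom (mem_singleton _)).compl
  · simpa using (measurableSet_generateFrom (mem_singleton sᶜ)).compl

theorem generateFrom_compl_pair (s : Set Ω) : generateFrom {sᶜ, s} = generateFrom {s} := by
  refine le_antisymm (generateFrom_le ?_) (generateFrom_mono (subset_insert _ _))
  rintro t (rfl | rfl)
  · exact (measurableSet_generateFrom (mem_singleton _)).compl
  · exact measurableSet_generateFrom (mem_singleton _)

end MeasurableSpace

namespace ProbabilityTheory

variable {Ω : Type*} {mΩ : MeasurableSpace Ω} {μ : Measure Ω} [IsFiniteMeasure μ]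
  {s t u v : Set Ω}

theorem condExp_set_generateFrom_singleton_ae_eq (hs : MeasurableSet s) (ht : MeasurableSet t) :
    μ⟦t | generateFrom {s}⟧ =ᵐ[μ] fun ω ↦
      μ[|s].real t * s.indicator (fun _ ↦ 1) ω + μ[|sᶜ].real t * sᶜ.indicator (fun _ ↦ 1) ω := by
  refine ae_of_ae_restrict_of_ae_restrict_compl s ?_ ?_
  · filter_upwards [condExp_set_generateFrom_singleton hs ht, ae_restrict_mem hs] with ω hω hωs
    rw [hω]
    simp [hωs]
  · rw [← generateFrom_compl_singleton]
    filter_upwards [condExp_set_generateFrom_singleton hs.compl ht, ae_restrict_mem hs.compl]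
      with ω hω hωs
    rw [hω]
    simp [notMem_of_mem_compl hωs]

theorem condExp_set_union_generateFrom_singleton (hu : MeasurableSet u) (hv : MeasurableSet v)
    (huv : Disjoint u v) (hμv : μ v ≠ 0) :
    μ⟦u ∪ v | generateFrom {v}⟧ =ᵐ[μ] fun ω ↦
      μ.real u / μ.real vᶜ * vᶜ.indicator (fun _ ↦ 1) ω + v.indicator (fun _ ↦ 1) ω := by
  have h_on : μ[|v].real (u ∪ v) = 1 := by
    rw [measureReal_def, ← cond_inter_self hv, inter_eq_left.mpr subset_union_right,
      cond_apply_self hμv (measure_ne_top _ _), ENNReal.toReal_one]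
  have h_off : μ[|vᶜ].real (u ∪ v) = μ.real u / μ.real vᶜ := by
    have : vᶜ ∩ (u ∪ v) = u := by
      rw [inter_union_distrib_left, compl_inter_self, union_empty,
        inter_eq_right.mpr huv.subset_compl_right]
    rw [measureReal_def, cond_apply hv.compl, this, ENNReal.toReal_mul, ENNReal.toReal_inv,
      div_eq_inv_mul, measureReal_def, measureReal_def]
  filter_upwards [condExp_set_generateFrom_singleton_ae_eq hv (hu.union hv)] with ω hω
  rw [hω, h_on, h_off]
  ring

end ProbabilityTheory

theorem abs_sub_indicator_compl_eq {Ω : Type*} {u v : Set Ω} (huv : Disjoint u v) {δ : ℝ}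
    (hδ : δ ≤ 1) (ω : Ω) :
    |δ * vᶜ.indicator (fun _ ↦ 1) ω + v.indicator (fun _ ↦ 1) ω
        - (δ * uᶜ.indicator (fun _ ↦ 1) ω + u.indicator (fun _ ↦ 1) ω)|
      = (1 - δ) * (u ∪ v).indicator (fun _ ↦ 1) ω := by
  by_cases hωu : ω ∈ u
  · have hωv : ω ∉ v := huv.notMem_of_mem_left hωu
    simp [hωu, hωv, abs_of_nonpos (sub_nonpos.mpr hδ)]
  by_cases hωv : ω ∈ v
  · simp [hωu, hωv, abs_of_nonneg (sub_nonneg.mpr hδ)]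
  · simp [hωu, hωv]

theorem le_mul_indicator_one_iff {Ω : Type*} {s : Set Ω} {a : ℝ} (ha : 0 < a) (ω : Ω) :
    a ≤ a * s.indicator (fun _ ↦ 1) ω ↔ ω ∈ s := by
  by_cases hω : ω ∈ s <;> simp [hω, ha]

section ThreeCell

variable {Ω : Type*} {mΩ : MeasurableSpace Ω} {P : Measure Ω} [IsProbabilityMeasure P]
  {u v : Set Ω} {δ : ℝ}

theorem condExp_set_union_generateFrom_compl_pair (hδ : 0 < δ) (hu : MeasurableSet u)
    (hv : MeasurableSet v) (huv : Disjoint u v) (hPu : P u = ENNReal.ofReal (δ / (1 + δ)))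
    (hPv : P v = ENNReal.ofReal (δ / (1 + δ))) :
    P⟦u ∪ v | generateFrom {vᶜ, v}⟧ =ᵐ[P] fun ω ↦
      δ * vᶜ.indicator (fun _ ↦ 1) ω + v.indicator (fun _ ↦ 1) ω := by
  have hreal : ∀ w, P w = ENNReal.ofReal (δ / (1 + δ)) → P.real w = δ / (1 + δ) := fun w hw ↦ by
    rw [measureReal_def, hw, ENNReal.toReal_ofReal (by positivity)]
  have hPv_ne : P v ≠ 0 := by rw [hPv]; exact (ENNReal.ofReal_pos.mpr (by positivity)).ne'
  have hratio : P.real u / P.real vᶜ = δ := by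
    rw [probReal_compl_eq_one_sub hv, hreal u hPu, hreal v hPv]
    field_simp
    ring
  rw [generateFrom_compl_pair, ← hratio]
  exact condExp_set_union_generateFrom_singleton hu hv huv hPv_ne

end ThreeCell

theorem three_cell_example_general
    {δ : ℝ} (hδ0 : 0 < δ) (hδ1 : δ < 1)
    {Ω : Type} {F : MeasurableSpace Ω} (P : Measure Ω) [IsProbabilityMeasure P]
    (C11 C12 C21 : Set Ω)
    (h12 : MeasurableSet C12) (h21 : MeasurableSet C21)
    (hd1 : Disjoint C11 C12) (hd2 : Disjoint C11 C21) (hd3 : Disjoint C12 C21)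
    (hcover : C11 ∪ C12 ∪ C21 = Set.univ)
    (hP12 : P C12 = ENNReal.ofReal (δ / (1 + δ)))
    (hP21 : P C21 = ENNReal.ofReal (δ / (1 + δ)))
    (A : Set Ω) (hA : A = C12 ∪ C21)
    (G H : MeasurableSpace Ω)
    (hG : G = MeasurableSpace.generateFrom {C11 ∪ C12, C21})
    (hH : H = MeasurableSpace.generateFrom {C11 ∪ C21, C12}) :
    (∀ᵐ ω ∂P, (P[A.indicator (fun _ => (1 : ℝ)) | G]) ω
        = δ * (C11 ∪ C12).indicator (fun _ => (1 : ℝ)) ω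
          + C21.indicator (fun _ => (1 : ℝ)) ω) ∧
    (∀ᵐ ω ∂P, (P[A.indicator (fun _ => (1 : ℝ)) | H]) ω
        = δ * (C11 ∪ C21).indicator (fun _ => (1 : ℝ)) ω
          + C12.indicator (fun _ => (1 : ℝ)) ω) ∧
    (∀ᵐ ω ∂P, |(P[A.indicator (fun _ => (1 : ℝ)) | G]) ω
        - (P[A.indicator (fun _ => (1 : ℝ)) | H]) ω|
        = (1 - δ) * A.indicator (fun _ => (1 : ℝ)) ω) ∧
    P {ω | 1 - δ ≤ |(P[A.indicator (fun _ => (1 : ℝ)) | G]) ω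
        - (P[A.indicator (fun _ => (1 : ℝ)) | H]) ω|} = P A ∧
    P A = ENNReal.ofReal (2 * δ / (1 + δ)) := by
  subst hA hG hH
  have hG : C11 ∪ C12 = C21ᶜ :=
    IsCompl.eq_compl ⟨disjoint_union_left.mpr ⟨hd2, hd3⟩, codisjoint_iff.mpr hcover⟩
  have hcover' : C11 ∪ C21 ∪ C12 = univ := by rwa [union_right_comm]
  have hH : C11 ∪ C21 = C12ᶜ :=
    IsCompl.eq_compl ⟨disjoint_union_left.mpr ⟨hd1, hd3.symm⟩, codisjoint_iff.mpr hcover'⟩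
  have hX := condExp_set_union_generateFrom_compl_pair hδ0 h12 h21 hd3 hP12 hP21
  have hY := condExp_set_union_generateFrom_compl_pair hδ0 h21 h12 hd3.symm hP21 hP12
  rw [union_comm C21] at hY
  rw [hG, hH]
  have hXY : ∀ᵐ ω ∂P, |(P⟦C12 ∪ C21 | generateFrom {C21ᶜ, C21}⟧) ω
      - (P⟦C12 ∪ C21 | generateFrom {C12ᶜ, C12}⟧) ω|
        = (1 - δ) * (C12 ∪ C21).indicator (fun _ ↦ 1) ω := by
    filter_upwards [hX, hY] with ω hXω hYω
    rw [hXω, hYω, abs_sub_indicator_compl_eq hd3 hδ1.le]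
  refine ⟨hX, hY, hXY, measure_congr (Filter.eventuallyEq_set.mpr ?_), ?_⟩
  · filter_upwards [hXY] with ω hω
    rw [hω, le_mul_indicator_one_iff (sub_pos.mpr hδ1)]
  · rw [measure_union hd3 h21, hP12, hP21, ← ENNReal.ofReal_add (by positivity) (by positivity)]
    congr 1
    ring

/-- The three-cell example: with P(C₁₂) = P(C₂₁) = δ/(1+δ), A = C₁₂ ∪ C₂₁,
G generated by {C₁₁ ∪ C₁₂, C₂₁} and H generated by {C₁₁ ∪ C₂₁, C₁₂}, one has
X = δ·1_{C₁₁∪C₁₂} + 1_{C₂₁} a.s., Y = δ·1_{C₁₁∪C₂₁} + 1_{C₁₂} a.s.,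
hence |X − Y| = (1−δ)·1_A a.s. and P(|X − Y| ≥ 1−δ) = P(A) = 2δ/(1+δ). -/
theorem three_cell_example
    {δ : ℝ} (hδ0 : 0 < δ) (hδ1 : δ < 1)
    {Ω : Type} {F : MeasurableSpace Ω} (P : Measure Ω) [IsProbabilityMeasure P]
    (C11 C12 C21 : Set Ω)
    (h11 : MeasurableSet C11) (h12 : MeasurableSet C12) (h21 : MeasurableSet C21)
    (hd1 : Disjoint C11 C12) (hd2 : Disjoint C11 C21) (hd3 : Disjoint C12 C21)
    (hcover : C11 ∪ C12 ∪ C21 = Set.univ)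
    (hP12 : P C12 = ENNReal.ofReal (δ / (1 + δ)))
    (hP21 : P C21 = ENNReal.ofReal (δ / (1 + δ)))
    (A : Set Ω) (hA : A = C12 ∪ C21)
    (G H : MeasurableSpace Ω)
    (hG : G = MeasurableSpace.generateFrom {C11 ∪ C12, C21})
    (hH : H = MeasurableSpace.generateFrom {C11 ∪ C21, C12}) :
    (∀ᵐ ω ∂P, (P[A.indicator (fun _ => (1 : ℝ)) | G]) ω
        = δ * (C11 ∪ C12).indicator (fun _ => (1 : ℝ)) ω
          + C21.indicator (fun _ => (1 : ℝ)) ω) ∧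
    (∀ᵐ ω ∂P, (P[A.indicator (fun _ => (1 : ℝ)) | H]) ω
        = δ * (C11 ∪ C21).indicator (fun _ => (1 : ℝ)) ω
          + C12.indicator (fun _ => (1 : ℝ)) ω) ∧
    (∀ᵐ ω ∂P, |(P[A.indicator (fun _ => (1 : ℝ)) | G]) ω
        - (P[A.indicator (fun _ => (1 : ℝ)) | H]) ω|
        = (1 - δ) * A.indicator (fun _ => (1 : ℝ)) ω) ∧
    P {ω | 1 - δ ≤ |(P[A.indicator (fun _ => (1 : ℝ)) | G]) ω
        - (P[A.indicator (fun _ => (1 : ℝ)) | H]) ω|} = P A ∧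
    P A = ENNReal.ofReal (2 * δ / (1 + δ)) :=
  three_cell_example_general hδ0 hδ1 (F := F) P C11 C12 C21 h12 h21 hd1 hd2 hd3 hcover hP12 hP21 A
    hA G H hG hH
end

section
/- For every δ ∈ (0, 1), for every probability space (Ω, F, P), every event A ∈ F, and all sub-σ-fields G and H of F, with X = E[1_A | G] and Y = E[1_A | H], one has P(|X − Y| ≥ 1 − δ) ≤ 2δ. -/
/-!
Let `Z = P[1_A | K]`. On a `K`-measurable set where `Z ≥ 1 - δ`, integrating `Z` shows that `A`
fails on at most a `δ`-fraction of it; likewise `A` holds on at most a `δ`-fraction of a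
`K`-measurable set where `Z ≤ δ`. For `δ < 1/2` these two sets are disjoint, so the event that the
prediction `Z` is confidently wrong has probability at most `δ`. Since `X, Y ∈ [0, 1]`, whenever
`|X - Y| ≥ 1 - δ` one of the two predictions is close to `1` and the other close to `0`, so one of
them is confidently wrong, whichever way `A` turns out.
-/

open MeasureTheory

theorem le_and_le_or_of_le_abs_sub {x y δ : ℝ} (hx : x ∈ Set.Icc 0 1) (hy : y ∈ Set.Icc 0 1)
    (h : 1 - δ ≤ |x - y|) : (1 - δ ≤ x ∧ y ≤ δ) ∨ (1 - δ ≤ y ∧ x ≤ δ) := by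
  obtain ⟨hx0, hx1⟩ := hx
  obtain ⟨hy0, hy1⟩ := hy
  rcases le_abs'.1 h with h | h
  · right; constructor <;> linarith
  · left; constructor <;> linarith

namespace MeasureTheory

variable {Ω : Type*} {m m₀ : MeasurableSpace Ω} {μ : Measure Ω} {A B : Set Ω}

def confidentErrorSet (μ : Measure Ω) (m : MeasurableSpace Ω) (A : Set Ω) (δ : ℝ) : Set Ω :=
  (Aᶜ ∩ {ω | 1 - δ ≤ μ[A.indicator (fun _ => (1 : ℝ)) | m] ω}) ∪
    (A ∩ {ω | μ[A.indicator (fun _ => (1 : ℝ)) | m] ω ≤ δ})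

section FiniteMeasure

variable [IsFiniteMeasure μ]

theorem condExp_indicator_one_mem_Icc (hm : m ≤ m₀) (hA : MeasurableSet[m₀] A) :
    ∀ᵐ ω ∂μ, μ[A.indicator (fun _ => (1 : ℝ)) | m] ω ∈ Set.Icc 0 1 := by
  have hf : Integrable (A.indicator fun _ => (1 : ℝ)) μ := (integrable_const 1).indicator hA
  have hle : A.indicator (fun _ => (1 : ℝ)) ≤ᵐ[μ] fun _ => 1 :=
    ae_of_all _ (Set.indicator_le_self' fun _ _ => zero_le_one)
  have hupper := condExp_mono (m := m) hf (integrable_const 1) hle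
  rw [condExp_const hm] at hupper
  have hnonneg : 0 ≤ᵐ[μ] A.indicator (fun _ => (1 : ℝ)) :=
    ae_of_all _ (Set.indicator_nonneg fun _ _ => zero_le_one)
  filter_upwards [condExp_nonneg (m := m) hnonneg, hupper] with ω h0 h1 using ⟨h0, h1⟩

theorem setIntegral_condExp_indicator_one (hm : m ≤ m₀) (hA : MeasurableSet[m₀] A)
    (hB : MeasurableSet[m] B) :
    ∫ ω in B, μ[A.indicator (fun _ => (1 : ℝ)) | m] ω ∂μ = μ.real (B ∩ A) := by
  rw [setIntegral_condExp hm ((integrable_const 1).indicator hA) hB,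
    setIntegral_indicator hA, setIntegral_const, smul_eq_mul, mul_one]

theorem measureReal_diff_le_of_le_condExp_indicator {c : ℝ} (hm : m ≤ m₀)
    (hA : MeasurableSet[m₀] A) (hB : MeasurableSet[m] B)
    (hc : ∀ ω ∈ B, c ≤ μ[A.indicator (fun _ => (1 : ℝ)) | m] ω) :
    μ.real (B \ A) ≤ (1 - c) * μ.real B := by
  have hint := setIntegral_ge_of_const_le_real (hm _ hB) (measure_ne_top _ _) hc
    integrable_condExp.integrableOn
  rw [setIntegral_condExp_indicator_one hm hA hB] at hint
  have hsplit := measureReal_inter_add_sdiff (μ := μ) (s := B) hA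
  linarith

theorem measureReal_inter_le_of_condExp_indicator_le {c : ℝ} (hm : m ≤ m₀)
    (hA : MeasurableSet[m₀] A) (hB : MeasurableSet[m] B)
    (hc : ∀ ω ∈ B, μ[A.indicator (fun _ => (1 : ℝ)) | m] ω ≤ c) :
    μ.real (B ∩ A) ≤ c * μ.real B := by
  rw [← setIntegral_condExp_indicator_one hm hA hB, mul_comm, ← smul_eq_mul, ← setIntegral_const]
  exact setIntegral_mono_on integrable_condExp.integrableOn
    (integrableOn_const (measure_ne_top _ _)) (hm _ hB) hc

theorem setOf_le_abs_sub_condExp_indicator_ae_le_confidentErrorSet_union {m' : MeasurableSpace Ω}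
    {δ : ℝ} (hm : m ≤ m₀) (hm' : m' ≤ m₀) (hA : MeasurableSet[m₀] A) :
    ({ω | 1 - δ ≤
        |μ[A.indicator (fun _ => (1 : ℝ)) | m] ω - μ[A.indicator (fun _ => (1 : ℝ)) | m'] ω|} : Set Ω)
      ≤ᵐ[μ] (confidentErrorSet μ m A δ ∪ confidentErrorSet μ m' A δ : Set Ω) := by
  filter_upwards [condExp_indicator_one_mem_Icc hm hA, condExp_indicator_one_mem_Icc hm' hA]
    with ω hx hy (hω : 1 - δ ≤ _)
  change ω ∈ confidentErrorSet μ m A δ ∪ confidentErrorSet μ m' A δ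
  simp only [confidentErrorSet, Set.mem_union, Set.mem_inter_iff, Set.mem_compl_iff,
    Set.mem_ofPred_eq]
  rcases le_and_le_or_of_le_abs_sub hx hy hω with ⟨hx, hy⟩ | ⟨hy, hx⟩ <;>
    by_cases hωA : ω ∈ A <;> tauto

end FiniteMeasure

theorem measure_confidentErrorSet_le [IsProbabilityMeasure μ] {δ : ℝ} (hδ0 : 0 ≤ δ)
    (hδ : 2 * δ < 1) (hm : m ≤ m₀) (hA : MeasurableSet[m₀] A) :
    μ (confidentErrorSet μ m A δ) ≤ ENNReal.ofReal δ := by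
  set Z := μ[A.indicator (fun _ => (1 : ℝ)) | m]
  have hZ : StronglyMeasurable[m] Z := stronglyMeasurable_condExp
  set high := {ω | 1 - δ ≤ Z ω}
  set low := {ω | Z ω ≤ δ}
  have hhigh : MeasurableSet[m] high := hZ.measurable measurableSet_Ici
  have hlow : MeasurableSet[m] low := hZ.measurable measurableSet_Iic
  have hmiss : μ.real (high \ A) ≤ δ * μ.real high := by
    simpa using measureReal_diff_le_of_le_condExp_indicator hm hA hhigh fun _ h => h
  have hfalse : μ.real (low ∩ A) ≤ δ * μ.real low :=
    measureReal_inter_le_of_condExp_indicator_le hm hA hlow fun _ h => h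
  have hdisj : Disjoint high low :=
    Set.disjoint_left.2 fun ω (h₁ : 1 - δ ≤ Z ω) (h₂ : Z ω ≤ δ) => by linarith
  have htotal : μ.real high + μ.real low ≤ 1 := by
    rw [← measureReal_union hdisj (hm _ hlow)]
    exact measureReal_le_one
  calc μ (confidentErrorSet μ m A δ) ≤ μ (high \ A) + μ (low ∩ A) := by
        rw [confidentErrorSet, Set.sdiff_eq, Set.inter_comm high, Set.inter_comm low]
        exact measure_union_le _ _
    _ = ENNReal.ofReal (μ.real (high \ A) + μ.real (low ∩ A)) := by
        rw [ENNReal.ofReal_add measureReal_nonneg measureReal_nonneg, ofReal_measureReal,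
          ofReal_measureReal]
    _ ≤ ENNReal.ofReal δ := ENNReal.ofReal_le_ofReal (by nlinarith)

end MeasureTheory

theorem contradictory_predictions_pitman_upper_bound_general
    {δ : ℝ} (hδ0 : 0 < δ)
    {Ω : Type} {F : MeasurableSpace Ω} (P : Measure Ω) [IsProbabilityMeasure P]
    (A : Set Ω) (hA : MeasurableSet A)
    (G H : MeasurableSpace Ω) (hG : G ≤ F) (hH : H ≤ F) :
    P {ω | 1 - δ ≤ |(P[A.indicator (fun _ => (1 : ℝ)) | G]) ω
        - (P[A.indicator (fun _ => (1 : ℝ)) | H]) ω|}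
      ≤ ENNReal.ofReal (2 * δ) := by
  rcases le_or_gt 1 (2 * δ) with hbig | hsmall
  · exact prob_le_one.trans (ENNReal.one_le_ofReal.2 hbig)
  calc _ ≤ P (confidentErrorSet P G A δ ∪ confidentErrorSet P H A δ) :=
        measure_mono_ae (setOf_le_abs_sub_condExp_indicator_ae_le_confidentErrorSet_union hG hH hA)
    _ ≤ P (confidentErrorSet P G A δ) + P (confidentErrorSet P H A δ) := measure_union_le _ _
    _ ≤ ENNReal.ofReal δ + ENNReal.ofReal δ :=
        add_le_add (measure_confidentErrorSet_le hδ0.le hsmall hG hA)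
          (measure_confidentErrorSet_le hδ0.le hsmall hH hA)
    _ = ENNReal.ofReal (2 * δ) := by rw [← ENNReal.ofReal_add hδ0.le hδ0.le, two_mul]

/-- Pitman's upper bound: for every δ ∈ (0, 1), P(|X − Y| ≥ 1 − δ) ≤ 2δ where
X = E[1_A | G] and Y = E[1_A | H]. -/
theorem contradictory_predictions_pitman_upper_bound
    {δ : ℝ} (hδ0 : 0 < δ) (hδ1 : δ < 1)
    {Ω : Type} {F : MeasurableSpace Ω} (P : Measure Ω) [IsProbabilityMeasure P]
    (A : Set Ω) (hA : MeasurableSet A)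
    (G H : MeasurableSpace Ω) (hG : G ≤ F) (hH : H ≤ F) :
    P {ω | 1 - δ ≤ |(P[A.indicator (fun _ => (1 : ℝ)) | G]) ω
        - (P[A.indicator (fun _ => (1 : ℝ)) | H]) ω|}
      ≤ ENNReal.ofReal (2 * δ) :=
  contradictory_predictions_pitman_upper_bound_general hδ0 P A hA G H hG hH
end

section
/- Let δ ∈ (0, 1), let (Ω, F, P) be a probability space, let A ∈ F, and let G, H ∈ F be events with P(G) > 0 and P(H) > 0. If |P(A | G) − P(A | H)| ≥ 1 − δ, then P(G ∩ H) ≤ (δ/(1 + δ))·(P(G) + P(H)). -/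
open MeasureTheory

lemma aux_overlap {δ a b x y c : ℝ} (hδ0 : 0 < δ) (hδ1 : δ < 1)
    (ha : 0 < a) (hb : 0 < b) (hxa : x ≤ a) (hy0 : 0 ≤ y)
    (hca : c ≤ a) (hcb : c ≤ b) (hkey : c ≤ y + (a - x))
    (hd : 1 - δ ≤ x / a - y / b) :
    c ≤ δ / (1 + δ) * (a + b) := by
  have hab : (1 - δ) * (a * b) ≤ b * x - a * y := by
    have h1 := mul_le_mul_of_nonneg_right hd (le_of_lt (mul_pos ha hb))
    have hx : x / a * (a * b) = b * x := by field_simp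
    have hy : y / b * (a * b) = a * y := by field_simp
    nlinarith [h1]
  rw [div_mul_eq_mul_div, le_div_iff₀ (by linarith : (0:ℝ) < 1 + δ)]
  rcases le_total a b with hle | hle
  · nlinarith [mul_le_mul_of_nonneg_left hkey ha.le,
      mul_le_mul_of_nonneg_right hxa (sub_nonneg.2 hle),
      mul_le_mul_of_nonneg_left hca hδ0.le, mul_pos ha hb]
  · nlinarith [mul_le_mul_of_nonneg_left hkey hb.le,
      mul_le_mul_of_nonneg_right hxa (sub_nonneg.2 hle),
      mul_le_mul_of_nonneg_left hcb hδ0.le, mul_pos ha hb]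

lemma aux_split {Ω : Type} {F : MeasurableSpace Ω} (P : Measure Ω) [IsProbabilityMeasure P]
    (A G H : Set Ω) (hA : MeasurableSet A) :
    (P (G ∩ H)).toReal ≤ (P (A ∩ H)).toReal + ((P G).toReal - (P (A ∩ G)).toReal) := by
  have hsub : G ∩ H ⊆ (A ∩ H) ∪ (G \ A) := by
    intro ω hω
    by_cases hωA : ω ∈ A
    · exact Or.inl ⟨hωA, hω.2⟩
    · exact Or.inr ⟨hω.1, hωA⟩
  have h1 : P (G ∩ H) ≤ P (A ∩ H) + P (G \ A) :=
    le_trans (measure_mono hsub) (measure_union_le _ _)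
  have h2 : P (G ∩ A) + P (G \ A) = P G := measure_inter_add_diff G hA
  have hAG : P (G ∩ A) = P (A ∩ G) := by rw [Set.inter_comm]
  have hfin : ∀ S : Set Ω, P S ≠ ⊤ := fun S => measure_ne_top P S
  have h1' := ENNReal.toReal_mono (by
      exact ENNReal.add_ne_top.2 ⟨hfin _, hfin _⟩) h1
  rw [ENNReal.toReal_add (hfin _) (hfin _)] at h1'
  have h2' : (P (G ∩ A)).toReal + (P (G \ A)).toReal = (P G).toReal := by
    rw [← ENNReal.toReal_add (hfin _) (hfin _), h2]
  rw [hAG] at h2'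
  linarith

/-- Lemma: if |P(A|G) − P(A|H)| ≥ 1 − δ for events G, H of positive probability,
then P(G ∩ H) ≤ (δ/(1+δ))·(P(G) + P(H)). -/
theorem overlap_bound_of_contradictory_conditional_probs
    {δ : ℝ} (hδ0 : 0 < δ) (hδ1 : δ < 1)
    {Ω : Type} {F : MeasurableSpace Ω} (P : Measure Ω) [IsProbabilityMeasure P]
    (A G H : Set Ω) (hA : MeasurableSet A) (hGm : MeasurableSet G) (hHm : MeasurableSet H)
    (hG : 0 < P G) (hH : 0 < P H)
    (h : 1 - δ ≤ |(P (A ∩ G)).toReal / (P G).toReal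
        - (P (A ∩ H)).toReal / (P H).toReal|) :
    (P (G ∩ H)).toReal ≤ δ / (1 + δ) * ((P G).toReal + (P H).toReal) := by
  have hfin : ∀ S : Set Ω, P S ≠ ⊤ := fun S => measure_ne_top P S
  have ha : 0 < (P G).toReal := ENNReal.toReal_pos hG.ne' (hfin G)
  have hb : 0 < (P H).toReal := ENNReal.toReal_pos hH.ne' (hfin H)
  have hxa : (P (A ∩ G)).toReal ≤ (P G).toReal :=
    ENNReal.toReal_mono (hfin G) (measure_mono Set.inter_subset_right)
  have hyb : (P (A ∩ H)).toReal ≤ (P H).toReal :=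
    ENNReal.toReal_mono (hfin H) (measure_mono Set.inter_subset_right)
  have hca : (P (G ∩ H)).toReal ≤ (P G).toReal :=
    ENNReal.toReal_mono (hfin G) (measure_mono Set.inter_subset_left)
  have hcb : (P (G ∩ H)).toReal ≤ (P H).toReal :=
    ENNReal.toReal_mono (hfin H) (measure_mono Set.inter_subset_right)
  rcases abs_cases ((P (A ∩ G)).toReal / (P G).toReal
      - (P (A ∩ H)).toReal / (P H).toReal) with ⟨heq, _⟩ | ⟨heq, _⟩ <;> rw [heq] at h
  · exact aux_overlap hδ0 hδ1 ha hb hxa ENNReal.toReal_nonneg hca hcb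
      (aux_split P A G H hA) h
  · have := aux_overlap hδ0 hδ1 hb ha hyb ENNReal.toReal_nonneg hcb hca
      (by rw [Set.inter_comm]; exact aux_split P A H G hA) (by linarith)
    linarith
end

section
/- Let (Ω, F, P) be a probability space and let A, G, H ∈ F be events with P(G) > 0 and P(H) > 0. Then P((G ∩ Hᶜ) ∪ (H ∩ Gᶜ) | G ∪ H) ≥ P(A | G) − P(A | H). -/
open MeasureTheory

/-- For events A, G, H with P(G) > 0 and P(H) > 0,
P((G ∩ Hᶜ) ∪ (H ∩ Gᶜ) | G ∪ H) ≥ P(A | G) − P(A | H). -/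
theorem symmDiff_conditional_bound
    {Ω : Type} {F : MeasurableSpace Ω} (P : Measure Ω) [IsProbabilityMeasure P]
    (A G H : Set Ω) (hA : MeasurableSet A) (hGm : MeasurableSet G) (hHm : MeasurableSet H)
    (hG : 0 < P G) (hH : 0 < P H) :
    (P (A ∩ G)).toReal / (P G).toReal - (P (A ∩ H)).toReal / (P H).toReal
      ≤ (P (((G ∩ Hᶜ) ∪ (H ∩ Gᶜ)) ∩ (G ∪ H))).toReal / (P (G ∪ H)).toReal := by
  set D : Set Ω := (G ∩ Hᶜ) ∪ (H ∩ Gᶜ) with hD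
  have hDcap : D ∩ (G ∪ H) = D := by
    apply Set.inter_eq_left.mpr
    intro x hx
    rcases hx with ⟨h1, _⟩ | ⟨h1, _⟩
    · exact Or.inl h1
    · exact Or.inr h1
  rw [hDcap]
  have hDm : MeasurableSet D :=
    (hGm.inter hHm.compl).union (hHm.inter hGm.compl)
  -- decomposition: G ∪ H = (G ∩ H) ∪ D, disjoint
  have hsplit : P (G ∪ H) = P (G ∩ H) + P D := by
    have hset : G ∪ H = (G ∩ H) ∪ D := by
      ext x
      simp only [hD, Set.mem_union, Set.mem_inter_iff, Set.mem_compl_iff]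
      tauto
    have hdisj : Disjoint (G ∩ H) D := by
      rw [Set.disjoint_left]
      rintro x ⟨hg, hh⟩ (⟨_, h2⟩ | ⟨_, h2⟩)
      · exact h2 hh
      · exact h2 hg
    rw [hset, measure_union hdisj hDm]
  have hGsplit : P G = P (G ∩ H) + P (G \ H) := by
    rw [← measure_inter_add_diff G hHm]
  have hAGle : P (A ∩ G) ≤ P (A ∩ G ∩ H) + P (G \ H) := by
    refine le_trans (measure_mono ?_) (measure_union_le _ _)
    intro x ⟨ha, hg⟩
    by_cases hh : x ∈ H
    · exact Or.inl ⟨⟨ha, hg⟩, hh⟩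
    · exact Or.inr ⟨hg, hh⟩
  have h1 : P (A ∩ G ∩ H) ≤ P (A ∩ H) := measure_mono (fun x ⟨⟨ha, _⟩, hh⟩ => ⟨ha, hh⟩)
  have h2 : P (A ∩ G ∩ H) ≤ P (G ∩ H) := measure_mono (fun x ⟨⟨_, hg⟩, hh⟩ => ⟨hg, hh⟩)
  have h3 : P H ≤ P (G ∪ H) := measure_mono Set.subset_union_right
  have h4 : P G ≤ P (G ∪ H) := measure_mono Set.subset_union_left
  have h5 : P (G \ H) ≤ P D := measure_mono (fun x ⟨hg, hh⟩ => Or.inl ⟨hg, hh⟩)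
  -- move to reals
  have fin : ∀ s : Set Ω, P s ≠ ⊤ := fun s => measure_ne_top P s
  set a := (P (A ∩ G ∩ H)).toReal
  set x := (P (A ∩ G)).toReal
  set y := (P (A ∩ H)).toReal
  set i := (P (G ∩ H)).toReal
  set g' := (P (G \ H)).toReal
  set d := (P D).toReal
  set g := (P G).toReal
  set h := (P H).toReal
  set u := (P (G ∪ H)).toReal
  have hg0 : 0 < g := ENNReal.toReal_pos hG.ne' (fin _)
  have hh0 : 0 < h := ENNReal.toReal_pos hH.ne' (fin _)
  have hu0 : 0 < u := lt_of_lt_of_le hg0 (ENNReal.toReal_le_toReal (fin _) (fin _) |>.mpr h4)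
  have e1 : u = i + d := by
    show (P (G ∪ H)).toReal = (P (G ∩ H)).toReal + (P D).toReal
    rw [hsplit, ENNReal.toReal_add (fin _) (fin _)]
  have e2 : g = i + g' := by
    show (P G).toReal = (P (G ∩ H)).toReal + (P (G \ H)).toReal
    rw [hGsplit, ENNReal.toReal_add (fin _) (fin _)]
  have e3 : x ≤ a + g' := by
    calc x ≤ (P (A ∩ G ∩ H) + P (G \ H)).toReal :=
          (ENNReal.toReal_le_toReal (fin _) (by simp [fin])).mpr hAGle
      _ = a + g' := ENNReal.toReal_add (fin _) (fin _)
  have e4 : a ≤ y := (ENNReal.toReal_le_toReal (fin _) (fin _)).mpr h1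
  have e5 : a ≤ i := (ENNReal.toReal_le_toReal (fin _) (fin _)).mpr h2
  have e6 : h ≤ u := (ENNReal.toReal_le_toReal (fin _) (fin _)).mpr h3
  have e7 : g ≤ u := (ENNReal.toReal_le_toReal (fin _) (fin _)).mpr h4
  have e8 : g' ≤ d := (ENNReal.toReal_le_toReal (fin _) (fin _)).mpr h5
  have ha0 : 0 ≤ a := ENNReal.toReal_nonneg
  have hi0 : 0 ≤ i := ENNReal.toReal_nonneg
  have hg'0 : 0 ≤ g' := ENNReal.toReal_nonneg
  rw [div_sub_div _ _ hg0.ne' hh0.ne', div_le_div_iff₀ (by positivity) hu0]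
  rw [e1, e2]
  rw [e1] at e6
  have hid : (0:ℝ) ≤ i + d := by linarith [hg'0.trans e8, hi0]
  have hig : (0:ℝ) ≤ i + g' := by linarith
  have key : a * (i + d) * (h - (i + g')) ≤ i * h * (d - g') := by
    rcases le_total h (i + g') with hc | hc
    · nlinarith [mul_nonneg (mul_nonneg ha0 hid) (by linarith : (0:ℝ) ≤ i + g' - h),
        mul_nonneg (mul_nonneg hi0 hh0.le) (by linarith : (0:ℝ) ≤ d - g')]
    · nlinarith [mul_nonneg (mul_nonneg (by linarith : (0:ℝ) ≤ i - a) hid)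
          (by linarith : (0:ℝ) ≤ h - (i + g')),
        mul_nonneg (mul_nonneg hi0 hig) (by linarith : (0:ℝ) ≤ i + d - h)]
  nlinarith [key, mul_nonneg (mul_nonneg (sub_nonneg.mpr e3) hh0.le) hid,
    mul_nonneg (mul_nonneg (sub_nonneg.mpr e4) hig) hid]
end

section
/- Let p₁, p₂, p₃ ∈ [0, 1] and let q₁, q₂, q₃ ≥ 0 be real numbers with q₁ + q₂ > 0 and q₂ + q₃ > 0. Then (p₁q₁ + p₂q₂)/(q₁ + q₂) − (p₂q₂ + p₃q₃)/(q₂ + q₃) ≤ (q₁ + q₃)/(q₁ + q₂ + q₃). -/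
/-- Algebraic inequality: for p₁, p₂, p₃ ∈ [0,1] and q₁, q₂, q₃ ≥ 0 with
q₁ + q₂ > 0 and q₂ + q₃ > 0,
(p₁q₁ + p₂q₂)/(q₁ + q₂) − (p₂q₂ + p₃q₃)/(q₂ + q₃) ≤ (q₁ + q₃)/(q₁ + q₂ + q₃). -/
theorem weighted_average_difference_bound
    (p₁ p₂ p₃ q₁ q₂ q₃ : ℝ)
    (hp₁ : p₁ ∈ Set.Icc (0 : ℝ) 1) (hp₂ : p₂ ∈ Set.Icc (0 : ℝ) 1)
    (hp₃ : p₃ ∈ Set.Icc (0 : ℝ) 1)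
    (hq₁ : 0 ≤ q₁) (hq₂ : 0 ≤ q₂) (hq₃ : 0 ≤ q₃)
    (h12 : 0 < q₁ + q₂) (h23 : 0 < q₂ + q₃) :
    (p₁ * q₁ + p₂ * q₂) / (q₁ + q₂) - (p₂ * q₂ + p₃ * q₃) / (q₂ + q₃)
      ≤ (q₁ + q₃) / (q₁ + q₂ + q₃) := by
  obtain ⟨hp₁0, hp₁1⟩ := hp₁
  obtain ⟨hp₂0, hp₂1⟩ := hp₂
  obtain ⟨hp₃0, hp₃1⟩ := hp₃
  have h123 : 0 < q₁ + q₂ + q₃ := by linarith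
  rw [div_sub_div _ _ h12.ne' h23.ne', div_le_div_iff₀ (by positivity) h123]
  rcases le_total q₁ q₃ with hc | hc
  · nlinarith [mul_nonneg (mul_nonneg (sub_nonneg.2 hp₁1) hq₁) (mul_nonneg h23.le h123.le),
      mul_nonneg (mul_nonneg hp₃0 hq₃) (mul_nonneg h12.le h123.le),
      mul_nonneg (mul_nonneg (sub_nonneg.2 hp₂1) hq₂) (mul_nonneg (sub_nonneg.2 hc) h123.le),
      mul_nonneg (mul_nonneg hq₁ hq₂) h12.le]
  · nlinarith [mul_nonneg (mul_nonneg (sub_nonneg.2 hp₁1) hq₁) (mul_nonneg h23.le h123.le),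
      mul_nonneg (mul_nonneg hp₃0 hq₃) (mul_nonneg h12.le h123.le),
      mul_nonneg (mul_nonneg hp₂0 hq₂) (mul_nonneg (sub_nonneg.2 hc) h123.le),
      mul_nonneg (mul_nonneg hq₂ hq₃) h23.le]
end

section
/- Let δ ∈ (0, 1), let (Ω, F, P) be a probability space, A ∈ F, and let G, H be sub-σ-fields of F. With X = E[1_A | G] and Y = E[1_A | H], one has P(X ≤ δ, Y ≥ 1 − δ) ≤ δ·(P(X ≤ δ) + P(Y ≥ 1 − δ)). -/
/-!
On the `G`-measurable event `{X ≤ δ}` the conditional probability of `A` is at most `δ`, so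
`A` occupies at most a `δ`-fraction of it; symmetrically `Aᶜ` occupies at most a `δ`-fraction
of the `H`-measurable event `{Y ≥ 1 - δ}`. A point of the intersection lies either in `A`, hence
in the first piece, or in `Aᶜ`, hence in the second.
-/

open MeasureTheory

namespace MeasureTheory

variable {Ω : Type*} {m m₀ : MeasurableSpace Ω} {μ : Measure Ω} [IsFiniteMeasure μ]
  {s t : Set Ω} {c : ℝ}

theorem setIntegral_condExp_indicator_one_s10 (hm : m ≤ m₀) (hs : MeasurableSet s)
    (ht : MeasurableSet[m] t) : ∫ ω in t, μ[s.indicator 1 | m] ω ∂μ = μ.real (t ∩ s) := by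
  rw [setIntegral_condExp hm ((integrable_const 1).indicator hs) ht, integral_indicator_one hs,
    measureReal_restrict_apply hs, Set.inter_comm]

theorem measureReal_inter_le_of_condExp_le (hm : m ≤ m₀) (hs : MeasurableSet s)
    (ht : MeasurableSet[m] t) (h : ∀ ω ∈ t, μ[s.indicator 1 | m] ω ≤ c) :
    μ.real (t ∩ s) ≤ c * μ.real t := by
  rw [← setIntegral_condExp_indicator_one_s10 hm hs ht, mul_comm, ← smul_eq_mul, ← setIntegral_const]
  exact setIntegral_mono_on integrable_condExp.integrableOn (integrableOn_const (by finiteness))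
    (hm _ ht) h

theorem le_measureReal_inter_of_le_condExp (hm : m ≤ m₀) (hs : MeasurableSet s)
    (ht : MeasurableSet[m] t) (h : ∀ ω ∈ t, c ≤ μ[s.indicator 1 | m] ω) :
    c * μ.real t ≤ μ.real (t ∩ s) := by
  rw [← setIntegral_condExp_indicator_one_s10 hm hs ht]
  exact setIntegral_ge_of_const_le_real (hm _ ht) (by finiteness) h
    integrable_condExp.integrableOn

theorem measureReal_diff_le_of_one_sub_le_condExp (hm : m ≤ m₀) (hs : MeasurableSet s)
    (ht : MeasurableSet[m] t) (h : ∀ ω ∈ t, 1 - c ≤ μ[s.indicator 1 | m] ω) :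
    μ.real (t \ s) ≤ c * μ.real t := by
  have hinter := le_measureReal_inter_of_le_condExp hm hs ht h
  have hsplit : μ.real (t ∩ s) + μ.real (t \ s) = μ.real t := measureReal_inter_add_sdiff hs
  linarith

end MeasureTheory

theorem corner_probability_bound_general
    {δ : ℝ} {Ω : Type} {F : MeasurableSpace Ω} (P : Measure Ω) [IsProbabilityMeasure P]
    (A : Set Ω) (hA : MeasurableSet A)
    (G H : MeasurableSpace Ω) (hG : G ≤ F) (hH : H ≤ F) :
    (P ({ω | (P[A.indicator (fun _ => (1 : ℝ)) | G]) ω ≤ δ}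
        ∩ {ω | 1 - δ ≤ (P[A.indicator (fun _ => (1 : ℝ)) | H]) ω})).toReal
      ≤ δ * ((P {ω | (P[A.indicator (fun _ => (1 : ℝ)) | G]) ω ≤ δ}).toReal
          + (P {ω | 1 - δ ≤ (P[A.indicator (fun _ => (1 : ℝ)) | H]) ω}).toReal) := by
  set S := {ω | (P[A.indicator 1 | G]) ω ≤ δ}
  set T := {ω | 1 - δ ≤ (P[A.indicator 1 | H]) ω}
  have hS : MeasurableSet[G] S :=
    measurableSet_le stronglyMeasurable_condExp.measurable measurable_const
  have hT : MeasurableSet[H] T :=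
    measurableSet_le measurable_const stronglyMeasurable_condExp.measurable
  calc P.real (S ∩ T) ≤ P.real (S ∩ A ∪ T \ A) := measureReal_mono fun ω ⟨hωS, hωT⟩ => by
        by_cases hωA : ω ∈ A
        exacts [Or.inl ⟨hωS, hωA⟩, Or.inr ⟨hωT, hωA⟩]
    _ ≤ P.real (S ∩ A) + P.real (T \ A) := measureReal_union_le _ _
    _ ≤ δ * P.real S + δ * P.real T :=
        add_le_add (measureReal_inter_le_of_condExp_le hG hA hS fun _ => id)
          (measureReal_diff_le_of_one_sub_le_condExp hH hA hT fun _ => id)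
    _ = δ * (P.real S + P.real T) := by ring

/-- With X = E[1_A | G] and Y = E[1_A | H], for δ ∈ (0,1),
P(X ≤ δ, Y ≥ 1 − δ) ≤ δ·(P(X ≤ δ) + P(Y ≥ 1 − δ)). -/
theorem corner_probability_bound
    {δ : ℝ} (hδ0 : 0 < δ) (hδ1 : δ < 1)
    {Ω : Type} {F : MeasurableSpace Ω} (P : Measure Ω) [IsProbabilityMeasure P]
    (A : Set Ω) (hA : MeasurableSet A)
    (G H : MeasurableSpace Ω) (hG : G ≤ F) (hH : H ≤ F) :
    (P ({ω | (P[A.indicator (fun _ => (1 : ℝ)) | G]) ω ≤ δ}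
        ∩ {ω | 1 - δ ≤ (P[A.indicator (fun _ => (1 : ℝ)) | H]) ω})).toReal
      ≤ δ * ((P {ω | (P[A.indicator (fun _ => (1 : ℝ)) | G]) ω ≤ δ}).toReal
          + (P {ω | 1 - δ ≤ (P[A.indicator (fun _ => (1 : ℝ)) | H]) ω}).toReal) :=
  corner_probability_bound_general P A hA G H hG hH
end

section
/- Let (Ω, F, P) be a probability space, A ∈ F, G a sub-σ-field of F, and X = E[1_A | G]. For an integer n > 1, let Gₙ be the σ-field generated by the sets {ω : k/n ≤ X(ω) < (k+1)/n} for 0 ≤ k ≤ n, and let Xₙ = E[1_A | Gₙ]. Then P(|Xₙ − X| ≤ 1/n) = 1. -/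
/-!
Let `Y = ∑ₖ (k/n)·1{k/n ≤ X < (k+1)/n}`. Since `0 ≤ X ≤ 1` a.s., `Y ≤ X ≤ Y + 1/n` a.s., and `Y`
is `Gₙ`-measurable. Conditioning on `Gₙ` is monotone and fixes `Y`, so `Y ≤ E[X | Gₙ] ≤ Y + 1/n`;
as `Gₙ ≤ G`, the tower property gives `Xₙ = E[X | Gₙ]`, hence `|Xₙ - X| ≤ 1/n` a.s.
-/

open MeasureTheory Set

namespace MeasureTheory

variable {Ω : Type*} {m m₀ : MeasurableSpace Ω} {μ : Measure Ω}

theorem ae_abs_condExp_sub_le_of_le_of_le [IsFiniteMeasure μ] (hm : m ≤ m₀) {X Y : Ω → ℝ} {c : ℝ}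
    (hX : Integrable X μ) (hY : StronglyMeasurable[m] Y) (hYX : ∀ᵐ ω ∂μ, Y ω ≤ X ω)
    (hXY : ∀ᵐ ω ∂μ, X ω ≤ Y ω + c) : ∀ᵐ ω ∂μ, |μ[X | m] ω - X ω| ≤ c := by
  have hYc : StronglyMeasurable[m] (fun ω => Y ω + c) := hY.add stronglyMeasurable_const
  have hYint : Integrable Y μ := by
    refine Integrable.mono' (hX.norm.add (integrable_const |c|))
      (hY.mono hm).aestronglyMeasurable ?_
    filter_upwards [hYX, hXY] with ω h₁ h₂
    simp only [Real.norm_eq_abs, Pi.add_apply]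
    exact abs_le.2 ⟨by linarith [neg_abs_le (X ω), le_abs_self c],
      by linarith [le_abs_self (X ω), abs_nonneg c]⟩
  have hYcint : Integrable (fun ω => Y ω + c) μ := hYint.add (integrable_const c)
  have hlow := condExp_mono (m := m) hYint hX hYX
  have hup := condExp_mono (m := m) hX hYcint hXY
  rw [condExp_of_stronglyMeasurable hm hY hYint] at hlow
  rw [condExp_of_stronglyMeasurable hm hYc hYcint] at hup
  filter_upwards [hlow, hup, hYX, hXY] with ω h₁ h₂ h₃ h₄
  exact abs_sub_le_iff.2 ⟨by linarith, by linarith⟩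

theorem ae_condExp_indicator_one_mem_Icc [IsFiniteMeasure μ] (hm : m ≤ m₀) {A : Set Ω}
    (hA : MeasurableSet A) :
    ∀ᵐ ω ∂μ, μ[A.indicator (fun _ => (1 : ℝ)) | m] ω ∈ Icc 0 1 := by
  have hle := condExp_mono (m := m) ((integrable_const (1 : ℝ)).indicator hA)
    (integrable_const (1 : ℝ)) (ae_of_all μ (indicator_le_self' fun _ _ => zero_le_one' ℝ))
  rw [condExp_const hm] at hle
  have hge := condExp_nonneg (m := m) (f := A.indicator fun _ => (1 : ℝ))
    (ae_of_all μ (indicator_nonneg fun _ _ => zero_le_one' ℝ))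
  filter_upwards [hge, hle] with ω h₀ h₁ using ⟨h₀, h₁⟩

end MeasureTheory

/-- Built from the level sets rather than as `⌊n x⌋₊ / n`, so that `gridFloor n ∘ X` is measurable
for `Gₙ` everywhere and not only almost everywhere. -/
noncomputable def gridFloor (n : ℕ) (x : ℝ) : ℝ :=
  ∑ k ∈ Finset.range (n + 1),
    (Ico ((k : ℝ) / n) (((k : ℝ) + 1) / n)).indicator (fun _ => (k : ℝ) / n) x

section gridFloor

variable {n : ℕ} {x : ℝ}

theorem mem_Ico_div_iff_floor_eq (hn : 0 < n) (hx : 0 ≤ x) (k : ℕ) :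
    x ∈ Ico ((k : ℝ) / n) (((k : ℝ) + 1) / n) ↔ ⌊n * x⌋₊ = k := by
  have hn' : (0 : ℝ) < n := by exact_mod_cast hn
  rw [Nat.floor_eq_iff (by positivity), mem_Ico, div_le_iff₀ hn', lt_div_iff₀ hn', mul_comm x]

theorem gridFloor_eq_floor_div (hn : 0 < n) (hx₀ : 0 ≤ x) (hx₁ : x ≤ 1) :
    gridFloor n x = ⌊n * x⌋₊ / n := by
  have hfloor : ⌊n * x⌋₊ ∈ Finset.range (n + 1) :=
    Finset.mem_range_succ_iff.2 (Nat.floor_le_of_le (mul_le_of_le_one_right n.cast_nonneg hx₁))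
  rw [gridFloor, Finset.sum_eq_single_of_mem _ hfloor]
  · exact indicator_of_mem ((mem_Ico_div_iff_floor_eq hn hx₀ _).2 rfl) _
  · intro k _ hk
    exact indicator_of_notMem (fun h => hk ((mem_Ico_div_iff_floor_eq hn hx₀ k).1 h).symm) _

theorem gridFloor_le_self (hn : 0 < n) (hx₀ : 0 ≤ x) (hx₁ : x ≤ 1) : gridFloor n x ≤ x := by
  have hn' : (0 : ℝ) < n := by exact_mod_cast hn
  rw [gridFloor_eq_floor_div hn hx₀ hx₁, div_le_iff₀ hn', mul_comm]
  exact Nat.floor_le (by positivity)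

theorem le_gridFloor_add_one_div (hn : 0 < n) (hx₀ : 0 ≤ x) (hx₁ : x ≤ 1) :
    x ≤ gridFloor n x + 1 / n := by
  have hn' : (0 : ℝ) < n := by exact_mod_cast hn
  rw [gridFloor_eq_floor_div hn hx₀ hx₁, ← add_div, le_div_iff₀ hn', mul_comm]
  exact (Nat.lt_floor_add_one _).le

theorem measurable_gridFloor_comp {Ω : Type*} {m : MeasurableSpace Ω} {X : Ω → ℝ}
    (hX : ∀ k ≤ n, MeasurableSet[m] {ω | (k : ℝ) / n ≤ X ω ∧ X ω < ((k : ℝ) + 1) / n}) :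
    Measurable[m] fun ω => gridFloor n (X ω) :=
  Finset.measurable_sum _ fun k hk =>
    measurable_const.indicator (hX k (Finset.mem_range_succ_iff.1 hk))

end gridFloor

/-- Discretization: with X = E[1_A | G] and Gₙ generated by the level sets
{k/n ≤ X < (k+1)/n}, 0 ≤ k ≤ n, and Xₙ = E[1_A | Gₙ], one has
P(|Xₙ − X| ≤ 1/n) = 1. -/
theorem discretized_condexp_close
    {Ω : Type} {F : MeasurableSpace Ω} (P : Measure Ω) [IsProbabilityMeasure P]
    (A : Set Ω) (hA : MeasurableSet A)
    (G : MeasurableSpace Ω) (hG : G ≤ F)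
    (X : Ω → ℝ) (hX : X = P[A.indicator (fun _ => (1 : ℝ)) | G])
    (n : ℕ) (hn : 1 < n)
    (Gn : MeasurableSpace Ω)
    (hGn : Gn = MeasurableSpace.generateFrom
      {s | ∃ k : ℕ, k ≤ n ∧ s = {ω | (k : ℝ) / n ≤ X ω ∧ X ω < ((k : ℝ) + 1) / n}}) :
    P {ω | |(P[A.indicator (fun _ => (1 : ℝ)) | Gn]) ω - X ω| ≤ 1 / n} = 1 := by
  have hn₀ : 0 < n := by omega
  have hXG : StronglyMeasurable[G] X := hX ▸ stronglyMeasurable_condExp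
  have hGnG : Gn ≤ G := hGn ▸ MeasurableSpace.generateFrom_le fun s ⟨k, _, hs⟩ =>
    hs ▸ hXG.measurable measurableSet_Ico
  have hlevel : ∀ k ≤ n, MeasurableSet[Gn] {ω | (k : ℝ) / n ≤ X ω ∧ X ω < ((k : ℝ) + 1) / n} :=
    fun k hk => hGn ▸ MeasurableSpace.measurableSet_generateFrom ⟨k, hk, rfl⟩
  have hX01 : ∀ᵐ ω ∂P, X ω ∈ Icc 0 1 := hX ▸ ae_condExp_indicator_one_mem_Icc hG hA
  have hclose : ∀ᵐ ω ∂P, |P[X | Gn] ω - X ω| ≤ 1 / n :=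
    ae_abs_condExp_sub_le_of_le_of_le (hGnG.trans hG) (hX ▸ integrable_condExp)
      (measurable_gridFloor_comp hlevel).stronglyMeasurable
      (hX01.mono fun ω hω => gridFloor_le_self hn₀ hω.1 hω.2)
      (hX01.mono fun ω hω => le_gridFloor_add_one_div hn₀ hω.1 hω.2)
  have htower : P[A.indicator (fun _ => (1 : ℝ)) | Gn] =ᵐ[P] P[X | Gn] :=
    hX ▸ (condExp_condExp_of_le hGnG hG).symm
  have hae : ∀ᵐ ω ∂P, |P[A.indicator (fun _ => (1 : ℝ)) | Gn] ω - X ω| ≤ 1 / n := by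
    filter_upwards [htower, hclose] with ω h₁ h₂
    rwa [h₁]
  rw [← measure_univ (μ := P)]
  exact measure_congr (ae_eq_univ.2 (ae_iff.1 hae))
end

section
/- Let δ ∈ (0, 1/2), let (Ω, F, P) be a probability space, A ∈ F, and let G, H be sub-σ-fields of F, with X = E[1_A | G] and Y = E[1_A | H]. For an integer n > 2/(1−δ) (so that 1 − δ − 2/n > 0), let Gₙ be the σ-field generated by the sets {k/n ≤ X < (k+1)/n}, 0 ≤ k ≤ n, and Hₙ the σ-field generated by the sets {k/n ≤ Y < (k+1)/n}, 0 ≤ k ≤ n, and set Xₙ = E[1_A | Gₙ], Yₙ = E[1_A | Hₙ]. Then P(|X − Y| ≥ 1 − δ) ≤ P(|Xₙ − Yₙ| ≥ 1 − δ − 2/n). -/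
open MeasureTheory

/-! With `X = P[1_A | G]` taking values in `[0, 1]`, the step function `ψ = ⌊n X⌋ / n` is
`Gₙ`-measurable and `0 ≤ X - ψ ≤ 1/n`. Since `Gₙ ≤ G`, the tower property gives
`P[1_A | Gₙ] - ψ = P[X - ψ | Gₙ] ∈ [0, 1/n]`, hence `|P[1_A | Gₙ] - X| ≤ 1/n` almost surely.
The same holds for `Y`, and the triangle inequality concludes. -/

section CondExpBounds

variable {Ω : Type*} {m m0 : MeasurableSpace Ω} {μ : Measure Ω} [IsFiniteMeasure μ] {f : Ω → ℝ}

theorem ae_condExp_mem_Icc (hm : m ≤ m0) (hf : Integrable f μ) {a b : ℝ}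
    (h : ∀ᵐ ω ∂μ, f ω ∈ Set.Icc a b) : ∀ᵐ ω ∂μ, μ[f|m] ω ∈ Set.Icc a b := by
  have hlow : μ[fun _ => a|m] ≤ᵐ[μ] μ[f|m] :=
    condExp_mono (integrable_const a) hf (h.mono fun _ hω => hω.1)
  have hup : μ[f|m] ≤ᵐ[μ] μ[fun _ => b|m] :=
    condExp_mono hf (integrable_const b) (h.mono fun _ hω => hω.2)
  rw [condExp_const hm] at hlow hup
  filter_upwards [hlow, hup] with ω hlow hup using ⟨hlow, hup⟩

theorem ae_abs_condExp_sub_le_of_sub_mem_Icc (hm : m ≤ m0) (hf : Integrable f μ) {ψ : Ω → ℝ}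
    (hψ : StronglyMeasurable[m] ψ) (hψi : Integrable ψ μ) {c : ℝ}
    (h : ∀ᵐ ω ∂μ, f ω - ψ ω ∈ Set.Icc 0 c) : ∀ᵐ ω ∂μ, |μ[f|m] ω - f ω| ≤ c := by
  have hsub : μ[f - ψ|m] =ᵐ[μ] μ[f|m] - ψ := by
    filter_upwards [condExp_sub hf hψi m] with ω hω
    rw [hω, Pi.sub_apply, Pi.sub_apply, condExp_of_stronglyMeasurable hm hψ hψi]
  filter_upwards [h, hsub, ae_condExp_mem_Icc hm (hf.sub hψi) h] with ω hfψ hsub hcond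
  rw [hsub, Pi.sub_apply] at hcond
  exact abs_sub_le_iff.2 ⟨by linarith [hcond.2, hfψ.1], by linarith [hcond.1, hfψ.2]⟩

end CondExpBounds

section LevelCells

variable {Ω : Type*} (X : Ω → ℝ) (n : ℕ)

def levelCell (k : ℕ) : Set Ω := {ω | (k : ℝ) / n ≤ X ω ∧ X ω < ((k : ℝ) + 1) / n}

abbrev levelCellSigma : MeasurableSpace Ω :=
  MeasurableSpace.generateFrom {s | ∃ k ≤ n, s = levelCell X n k}

/-- This is `⌊n X⌋ / n` wherever `0 ≤ X ≤ 1`, written through the cells to make it visibly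
`levelCellSigma`-measurable. -/
noncomputable def levelStep (ω : Ω) : ℝ :=
  ∑ k ∈ Finset.range (n + 1), (levelCell X n k).indicator (fun _ => (k : ℝ) / n) ω

variable {X n}

theorem measurableSet_levelCell {k : ℕ} (hk : k ≤ n) :
    MeasurableSet[levelCellSigma X n] (levelCell X n k) :=
  MeasurableSpace.measurableSet_generateFrom ⟨k, hk, rfl⟩

theorem levelCellSigma_le {m : MeasurableSpace Ω} (hX : Measurable[m] X) :
    levelCellSigma X n ≤ m :=
  MeasurableSpace.generateFrom_le fun _ ⟨_, _, hs⟩ => hs ▸ hX measurableSet_Ico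

theorem stronglyMeasurable_levelStep : StronglyMeasurable[levelCellSigma X n] (levelStep X n) :=
  Finset.stronglyMeasurable_fun_sum _ fun _ hk =>
    stronglyMeasurable_const.indicator
      (measurableSet_levelCell (Nat.lt_succ_iff.mp (Finset.mem_range.mp hk)))

theorem integrable_levelStep {m0 : MeasurableSpace Ω} {μ : Measure Ω} [IsFiniteMeasure μ]
    (hX : Measurable X) : Integrable (levelStep X n) μ :=
  integrable_finsetSum _ fun _ _ => (integrable_const _).indicator (hX measurableSet_Ico)

theorem mem_levelCell_iff (hn : 0 < n) {ω : Ω} (hX : 0 ≤ X ω) {k : ℕ} :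
    ω ∈ levelCell X n k ↔ ⌊n * X ω⌋₊ = k := by
  have hnR : (0 : ℝ) < n := Nat.cast_pos.mpr hn
  rw [Nat.floor_eq_iff (by positivity), levelCell, Set.mem_ofPred_eq, div_le_iff₀ hnR,
    lt_div_iff₀ hnR, mul_comm (X ω)]

theorem levelStep_eq_floor (hn : 0 < n) {ω : Ω} (hX : X ω ∈ Set.Icc 0 1) :
    levelStep X n ω = ⌊n * X ω⌋₊ / n := by
  have hfloor : ⌊n * X ω⌋₊ ≤ n :=
    Nat.floor_le_of_le (by simpa using mul_le_mul_of_nonneg_left hX.2 (Nat.cast_nonneg n))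
  classical
  simp only [levelStep, Set.indicator_apply, mem_levelCell_iff hn hX.1]
  rw [Finset.sum_ite_eq, if_pos (Finset.mem_range.mpr (Nat.lt_succ_of_le hfloor))]

theorem sub_levelStep_mem_Icc (hn : 0 < n) {ω : Ω} (hX : X ω ∈ Set.Icc 0 1) :
    X ω - levelStep X n ω ∈ Set.Icc 0 (1 / n : ℝ) := by
  have hnR : (0 : ℝ) < n := Nat.cast_pos.mpr hn
  have hnX : 0 ≤ n * X ω := mul_nonneg hnR.le hX.1
  rw [levelStep_eq_floor hn hX, Set.mem_Icc, sub_nonneg, div_le_iff₀ hnR, sub_le_iff_le_add,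
    ← add_div, le_div_iff₀ hnR, mul_comm (X ω)]
  exact ⟨Nat.floor_le hnX, by linarith [Nat.lt_floor_add_one (n * X ω)]⟩

end LevelCells

theorem ae_abs_condExp_levelCellSigma_sub_le {Ω : Type*} {m m0 : MeasurableSpace Ω}
    {μ : Measure Ω} [IsFiniteMeasure μ] (hm : m ≤ m0) {f : Ω → ℝ} (hf : Integrable f μ)
    (hf01 : ∀ᵐ ω ∂μ, f ω ∈ Set.Icc 0 1) {n : ℕ} (hn : 0 < n) :
    ∀ᵐ ω ∂μ, |μ[f|levelCellSigma (μ[f|m]) n] ω - μ[f|m] ω| ≤ 1 / n := by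
  have hle : levelCellSigma (μ[f|m]) n ≤ m :=
    levelCellSigma_le stronglyMeasurable_condExp.measurable
  have htower : μ[μ[f|m]|levelCellSigma (μ[f|m]) n] =ᵐ[μ] μ[f|levelCellSigma (μ[f|m]) n] :=
    condExp_condExp_of_le hle hm
  have hstep := ae_abs_condExp_sub_le_of_sub_mem_Icc (hle.trans hm) integrable_condExp
    stronglyMeasurable_levelStep
    (integrable_levelStep (stronglyMeasurable_condExp.measurable.mono hm le_rfl))
    ((ae_condExp_mem_Icc hm hf hf01).mono fun _ => sub_levelStep_mem_Icc hn)
  filter_upwards [htower, hstep] with ω htower hstep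
  rwa [← htower]

theorem discretization_comparison_general
    {δ : ℝ} (hδ1 : δ < 1 / 2)
    {Ω : Type} {F : MeasurableSpace Ω} (P : Measure Ω) [IsProbabilityMeasure P]
    (A : Set Ω) (hA : MeasurableSet A)
    (G H : MeasurableSpace Ω) (hG : G ≤ F) (hH : H ≤ F)
    (X Y : Ω → ℝ)
    (hX : X = P[A.indicator (fun _ => (1 : ℝ)) | G])
    (hY : Y = P[A.indicator (fun _ => (1 : ℝ)) | H])
    (n : ℕ) (hn : 2 / (1 - δ) < (n : ℝ))
    (Gn Hn : MeasurableSpace Ω)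
    (hGn : Gn = MeasurableSpace.generateFrom
      {s | ∃ k : ℕ, k ≤ n ∧ s = {ω | (k : ℝ) / n ≤ X ω ∧ X ω < ((k : ℝ) + 1) / n}})
    (hHn : Hn = MeasurableSpace.generateFrom
      {s | ∃ k : ℕ, k ≤ n ∧ s = {ω | (k : ℝ) / n ≤ Y ω ∧ Y ω < ((k : ℝ) + 1) / n}}) :
    P {ω | 1 - δ ≤ |X ω - Y ω|}
      ≤ P {ω | 1 - δ - 2 / n ≤ |(P[A.indicator (fun _ => (1 : ℝ)) | Gn]) ω
          - (P[A.indicator (fun _ => (1 : ℝ)) | Hn]) ω|} := by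
  have hn0 : 0 < n := Nat.cast_pos.mp (lt_trans (div_pos two_pos (by linarith)) hn)
  have hA01 : ∀ᵐ ω ∂P, A.indicator (fun _ => (1 : ℝ)) ω ∈ Set.Icc 0 1 :=
    .of_forall fun ω => by by_cases hω : ω ∈ A <;> simp [hω]
  have hAi : Integrable (A.indicator fun _ => (1 : ℝ)) P := (integrable_const 1).indicator hA
  have hXn : ∀ᵐ ω ∂P, |P[A.indicator (fun _ => (1 : ℝ)) | Gn] ω - X ω| ≤ 1 / n := by
    subst hX hGn
    exact ae_abs_condExp_levelCellSigma_sub_le hG hAi hA01 hn0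
  have hYn : ∀ᵐ ω ∂P, |P[A.indicator (fun _ => (1 : ℝ)) | Hn] ω - Y ω| ≤ 1 / n := by
    subst hY hHn
    exact ae_abs_condExp_levelCellSigma_sub_le hH hAi hA01 hn0
  set Xn := P[A.indicator (fun _ => (1 : ℝ)) | Gn]
  set Yn := P[A.indicator (fun _ => (1 : ℝ)) | Hn]
  refine measure_mono_ae ?_
  filter_upwards [hXn, hYn] with ω hXω hYω (hω : 1 - δ ≤ |X ω - Y ω|)
  show 1 - δ - 2 / n ≤ |Xn ω - Yn ω|
  have htwo : (2 / n : ℝ) = 1 / n + 1 / n := by ring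
  linarith [abs_sub_le (X ω) (Xn ω) (Y ω), abs_sub_le (Xn ω) (Yn ω) (Y ω),
    abs_sub_comm (X ω) (Xn ω)]

/-- Discretization of both σ-fields: with X = E[1_A | G], Y = E[1_A | H],
Gₙ, Hₙ the σ-fields generated by the level sets of X resp. Y at scale 1/n,
Xₙ = E[1_A | Gₙ], Yₙ = E[1_A | Hₙ], and n > 2/(1−δ), one has
P(|X − Y| ≥ 1 − δ) ≤ P(|Xₙ − Yₙ| ≥ 1 − δ − 2/n). -/
theorem discretization_comparison
    {δ : ℝ} (hδ0 : 0 < δ) (hδ1 : δ < 1 / 2)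
    {Ω : Type} {F : MeasurableSpace Ω} (P : Measure Ω) [IsProbabilityMeasure P]
    (A : Set Ω) (hA : MeasurableSet A)
    (G H : MeasurableSpace Ω) (hG : G ≤ F) (hH : H ≤ F)
    (X Y : Ω → ℝ)
    (hX : X = P[A.indicator (fun _ => (1 : ℝ)) | G])
    (hY : Y = P[A.indicator (fun _ => (1 : ℝ)) | H])
    (n : ℕ) (hn : 2 / (1 - δ) < (n : ℝ))
    (Gn Hn : MeasurableSpace Ω)
    (hGn : Gn = MeasurableSpace.generateFrom
      {s | ∃ k : ℕ, k ≤ n ∧ s = {ω | (k : ℝ) / n ≤ X ω ∧ X ω < ((k : ℝ) + 1) / n}})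
    (hHn : Hn = MeasurableSpace.generateFrom
      {s | ∃ k : ℕ, k ≤ n ∧ s = {ω | (k : ℝ) / n ≤ Y ω ∧ Y ω < ((k : ℝ) + 1) / n}}) :
    P {ω | 1 - δ ≤ |X ω - Y ω|}
      ≤ P {ω | 1 - δ - 2 / n ≤ |(P[A.indicator (fun _ => (1 : ℝ)) | Gn]) ω
          - (P[A.indicator (fun _ => (1 : ℝ)) | Hn]) ω|} :=
  discretization_comparison_general hδ1 P A hA G H hG hH X Y hX hY n hn Gn Hn hGn hHn
end
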